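/- arXiv:1908.01360 — 2 statements merged into one kernel-verified Lean document; each statement's English description precedes it below -/
import Mathlib

section
/- (Lemma 5.1) For any (right) hypergroup over a group M_H and any elements ξ ∈ H, x ∈ M, one has ξ̄ · x̄ = ξx in the exact product H ⊙ M, where ξ̄ = (ξ·θ)o and x̄ = εx. -/
/-- A (right) hypergroup over the group `H`, with basic set `M`:
structural mappings `Φ` (written `a^α`), `Ψ` (written `ᵃα`), `Ξ` (written `[a,b]`),
`Λ` (written `(a,b)`), satisfying conditions P1)–P4). -/
structure HypergroupOverGroup (M H : Type*) [Group H] where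
  Φ : M → H → M
  Ψ : M → H → H
  Ξ : M → M → M
  Λ : M → M → H
  /-- the left neutral element of `Ξ` -/
  o : M
  P1i : ∀ a b : M, ∃! x : M, Ξ x a = b
  P1ii : ∀ a : M, Ξ o a = a
  P2i : ∀ (a : M) (α β : H), Φ (Φ a α) β = Φ a (α * β)
  P2ii : ∀ a : M, Φ a 1 = a
  P3 : Function.Surjective fun α : H => Ψ o α
  A1 : ∀ (a : M) (α β : H), Ψ a (α * β) = Ψ a α * Ψ (Φ a α) β
  A2 : ∀ (a b : M) (α : H), Φ (Ξ a b) α = Ξ (Φ a (Ψ b α)) (Φ b α)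
  A3 : ∀ (a b : M) (α : H),
    Λ a b * Ψ (Ξ a b) α = Ψ a (Ψ b α) * Λ (Φ a (Ψ b α)) (Φ b α)
  A4 : ∀ a b c : M, Ξ (Ξ a b) c = Ξ (Φ a (Λ b c)) (Ξ b c)
  A5 : ∀ a b c : M,
    Λ a b * Λ (Ξ a b) c = Ψ a (Λ b c) * Λ (Φ a (Λ b c)) (Ξ b c)

/-- The multiplication of the exact product `H ⊙ M` associated with a hypergroup
over the group `M_H`, on the set of two-letter words `αa` (encoded as pairs):
`αa · βb = (α · ᵃβ · (a^β, b))[a^β, b]`. -/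
def HypergroupOverGroup.emul {M H : Type*} [Group H]
    (h : HypergroupOverGroup M H) : H × M → H × M → H × M :=
  fun p q =>
    (p.1 * h.Ψ p.2 q.1 * h.Λ (h.Φ p.2 q.1) q.2, h.Ξ (h.Φ p.2 q.1) q.2)

namespace HypergroupOverGroup

variable {M H : Type*} [Group H] (h : HypergroupOverGroup M H)

/-- `Ψ o 1 = 1`. -/
lemma psi_o_one : h.Ψ h.o 1 = 1 := by
  have := h.A1 h.o 1 1
  rw [one_mul, h.P2ii] at this
  exact left_eq_mul.mp this

/-- `Φ o β = o` for all `β`. -/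
lemma phi_o (β : H) : h.Φ h.o β = h.o := by
  obtain ⟨α, hα⟩ := h.P3 β
  have key := h.A2 h.o h.o α
  rw [h.P1ii] at key
  -- key : Φ o α = Ξ (Φ o (Ψ o α)) (Φ o α)
  have uniq := h.P1i (h.Φ h.o α) (h.Φ h.o α)
  obtain ⟨y, hy, hyu⟩ := uniq
  have h1 : h.Φ h.o (h.Ψ h.o α) = y := hyu _ key.symm
  have h2 : h.o = y := hyu _ (h.P1ii _)
  simp only at hα
  rw [← hα, h1, h2]

/-- `Ψ o β = Λ o o * β * (Λ o o)⁻¹`. -/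
lemma psi_o (β : H) : h.Ψ h.o β = h.Λ h.o h.o * β * (h.Λ h.o h.o)⁻¹ := by
  obtain ⟨α, hα⟩ := h.P3 β
  have key := h.A3 h.o h.o α
  rw [h.P1ii, h.phi_o, h.phi_o] at key
  -- key : Λ o o * Ψ o α = Ψ o (Ψ o α) * Λ o o
  simp only at hα
  rw [hα] at key
  exact eq_mul_inv_of_mul_eq key.symm

/-- `Λ o x = Λ o o` for all `x`. -/
lemma lambda_o (x : M) : h.Λ h.o x = h.Λ h.o h.o := by
  have key := h.A5 h.o h.o x
  rw [h.P1ii, h.P1ii, h.phi_o, h.psi_o] at key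
  -- key : Λ o o * Λ o x = Λ o o * Λ o x * (Λ o o)⁻¹ * Λ o x
  rw [mul_assoc (h.Λ h.o h.o * h.Λ h.o x)] at key
  have h2 : (h.Λ h.o h.o)⁻¹ * h.Λ h.o x = 1 := left_eq_mul.mp key
  exact (inv_mul_eq_one.mp h2).symm

end HypergroupOverGroup

/-- (Lemma 5.1) For any `ξ ∈ H`, `x ∈ M` one has `ξ̄ · x̄ = ξx` in the exact
product `H ⊙ M`, where `ξ̄ = (ξ·θ)o` and `x̄ = εx`, with `θ = Λ(o,o)⁻¹`. -/
theorem exactProduct_bar_mul {M H : Type*} [Group H]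
    (h : HypergroupOverGroup M H) (θ : H) (hθ : θ = (h.Λ h.o h.o)⁻¹)
    (ξ : H) (x : M) :
    h.emul (ξ * θ, h.o) ((1 : H), x) = (ξ, x) := by
  simp only [HypergroupOverGroup.emul, h.P2ii, h.psi_o_one, h.lambda_o, h.P1ii, hθ]
  rw [Prod.mk.injEq]
  exact ⟨by group, rfl⟩
end

section
/- For any (right) hypergroup over a group M_H, the map f₀: H → H ⊙ M, α ↦ (α·θ)o, is an injective group homomorphism, the map f₁: M → H ⊙ M, a ↦ εa, is injective, and every element of H ⊙ M has a unique representation as a product f₀(ξ)·f₁(x) with ξ ∈ H, x ∈ M; consequently the image of f₁ is a right complementary set (right transversal) to the subgroup f₀(H) in H ⊙ M. -/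
/-!
Two identities drive everything. By P1 and A2 (with `a = o`), `o` is fixed by every `Ψ b α`, hence,
by P3, by all of `H`; then A3 at `(o, o)` says that `α ↦ ᵒα` is conjugation by `(o, o) = θ⁻¹`.
With these, `f₀ ξ · f₀ η = (ξ θ θ⁻¹ η θ) o = f₀ (ξ η)` and `f₀ ξ · f₁ x = (ξ θ (o, x)) x`,
so a word `ζ z` is `f₀ ξ · f₁ x` exactly when `x = z` and `ξ = ζ (o, z)⁻¹ θ⁻¹`.
-/

namespace HypergroupOverGroup

variable {M H : Type*} [Group H] (h : HypergroupOverGroup M H)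

theorem Ψ_one (a : M) : h.Ψ a 1 = 1 := by
  have e := h.A1 a 1 1
  rw [h.P2ii, one_mul] at e
  exact mul_eq_left.mp e.symm

theorem eq_o_of_Ξ_eq_self {x a : M} (hx : h.Ξ x a = a) : x = h.o :=
  (h.P1i a a).unique hx (h.P1ii a)

theorem Φ_o_Ψ (b : M) (α : H) : h.Φ h.o (h.Ψ b α) = h.o := by
  apply h.eq_o_of_Ξ_eq_self
  rw [← h.A2, h.P1ii]

theorem Φ_o (γ : H) : h.Φ h.o γ = h.o := by
  obtain ⟨α, rfl⟩ := h.P3 γ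
  exact h.Φ_o_Ψ h.o α

theorem Ψ_o (γ : H) : h.Ψ h.o γ = h.Λ h.o h.o * γ * (h.Λ h.o h.o)⁻¹ := by
  obtain ⟨α, rfl⟩ := h.P3 γ
  have e := h.A3 h.o h.o α
  rw [h.P1ii, h.Φ_o, h.Φ_o] at e
  exact eq_mul_inv_of_mul_eq e.symm

theorem emul_mk_o_mk_o (α β : H) :
    h.emul (α, h.o) (β, h.o) = (α * h.Λ h.o h.o * β, h.o) := by
  simp only [emul, h.Ψ_o, h.Φ_o, h.P1ii, Prod.mk.injEq, and_true]
  group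

theorem emul_mk_one (p : H × M) (b : M) :
    h.emul p (1, b) = (p.1 * h.Λ p.2 b, h.Ξ p.2 b) := by
  simp only [emul, h.Ψ_one, h.P2ii, mul_one]

end HypergroupOverGroup

/-- The map `f₀ : H → H ⊙ M, α ↦ (α·θ)o` is an injective homomorphism into the
exact product, the map `f₁ : M → H ⊙ M, a ↦ εa` is injective, and every element
of `H ⊙ M` has a unique representation as a product `f₀(ξ) · f₁(x)` with
`ξ ∈ H`, `x ∈ M`; consequently the image of `f₁` is a right complementary set
(right transversal) to the subgroup `f₀(H)` in `H ⊙ M`. -/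
theorem exactProduct_transversal {M H : Type*} [Group H]
    (h : HypergroupOverGroup M H) (θ : H) (hθ : θ = (h.Λ h.o h.o)⁻¹)
    (f₀ : H → H × M) (hf₀ : ∀ α : H, f₀ α = (α * θ, h.o))
    (f₁ : M → H × M) (hf₁ : ∀ a : M, f₁ a = ((1 : H), a)) :
    Function.Injective f₀ ∧
    (∀ α β : H, f₀ (α * β) = h.emul (f₀ α) (f₀ β)) ∧
    Function.Injective f₁ ∧
    (∀ z : H × M, ∃! q : H × M, h.emul (f₀ q.1) (f₁ q.2) = z) := by
  obtain rfl : f₀ = fun α => (α * θ, h.o) := funext hf₀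
  obtain rfl : f₁ = fun a => (1, a) := funext hf₁
  have hf₀f₁ (ξ : H) (x : M) : h.emul (ξ * θ, h.o) (1, x) = (ξ * θ * h.Λ h.o x, x) := by
    rw [h.emul_mk_one, h.P1ii]
  refine ⟨fun α β e => mul_right_cancel (Prod.ext_iff.mp e).1, fun α β => ?_,
    fun a b e => (Prod.ext_iff.mp e).2, fun z => ?_⟩
  · rw [h.emul_mk_o_mk_o, hθ]
    group
  · beta_reduce
    simp only [hf₀f₁]
    refine ⟨(z.1 * (h.Λ h.o z.2)⁻¹ * θ⁻¹, z.2), by simp, ?_⟩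
    rintro ⟨ξ, x⟩ rfl
    simp
end
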